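/- arXiv:1907.10773 — 4 statements merged into one kernel-verified Lean document; each statement's English description precedes it below -/
import Mathlib

section
/- For all x ∈ ℂ^d and all α, ω ∈ [d]_0, one has (F_d(x ∘ S_ω conj(x)))_α = (1/d) e^{2πiωα/d} (F_d((F_d x) ∘ S_{-α} conj(F_d x)))_ω. -/
open Complex BigOperators Finset

/-- Discrete Fourier transform on `ℂ^d` (indexed by `ZMod d`). -/
noncomputable def dftV (d : ℕ) [NeZero d] (x : ZMod d → ℂ) : ZMod d → ℂ :=
  fun k => ∑ n : ZMod d, x n *
    Complex.exp (-2 * Real.pi * Complex.I * (n.val : ℂ) * (k.val : ℂ) / (d : ℂ))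

/-- Circular shift: `(S_ℓ x)_n = x_{n+ℓ}`. -/
def shiftV {d : ℕ} (ℓ : ZMod d) (x : ZMod d → ℂ) : ZMod d → ℂ := fun n => x (n + ℓ)

/-- Reversal: `(R x)_n = x_{-n}`. -/
def revV {d : ℕ} (x : ZMod d → ℂ) : ZMod d → ℂ := fun n => x (-n)

/-- Componentwise complex conjugation. -/
def conjV {d : ℕ} (x : ZMod d → ℂ) : ZMod d → ℂ := fun n => (starRingEnd ℂ) (x n)

/-- Hadamard (componentwise) product. -/
def hadV {d : ℕ} (x y : ZMod d → ℂ) : ZMod d → ℂ := fun n => x n * y n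

/-- Circular convolution. -/
noncomputable def convV (d : ℕ) [NeZero d] (x y : ZMod d → ℂ) : ZMod d → ℂ :=
  fun ℓ => ∑ n : ZMod d, x n * y (ℓ - n)

/-- Modulation: `(W_ℓ x)_n = x_n e^{2πiℓn/d}`. -/
noncomputable def modV {d : ℕ} (ℓ : ZMod d) (x : ZMod d → ℂ) : ZMod d → ℂ :=
  fun n => x n * Complex.exp (2 * Real.pi * Complex.I * (ℓ.val : ℂ) * (n.val : ℂ) / (d : ℂ))

/-! Parseval's identity for `x` and `y j = e(jα) x (j + ω)`, where `e = ZMod.stdAddChar`, gives the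
claim: translating by `ω` and modulating by `α` turns the transform of `x` into
`𝓕 y k = e(ω (k - α)) 𝓕 x (k - α)`, and the phase `e(ω (k - α))` splits into the factor
`e(ωα)` and the kernel `e(-kω)` of the outer transform on the right-hand side. -/

open scoped ZMod Real ComplexConjugate

namespace ZMod

variable {N : ℕ} [NeZero N]

lemma stdAddChar_mul_eq_exp (j k : ZMod N) :
    stdAddChar (j * k) = exp (2 * π * I * j.val * k.val / N) := by
  have : j * k = ((j.val * k.val : ℕ) : ZMod N) := by simp
  rw [this, stdAddChar_apply, toCircle_natCast]
  push_cast
  ring_nf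

lemma stdAddChar_neg_mul_eq_exp (j k : ZMod N) :
    stdAddChar (-(j * k)) = exp (-2 * π * I * j.val * k.val / N) := by
  rw [AddChar.map_neg_eq_inv, stdAddChar_mul_eq_exp, ← exp_neg]
  ring_nf

variable {E : Type*} [AddCommGroup E] [Module ℂ E]

lemma dft_comp_add_right (Φ : ZMod N → E) (a k : ZMod N) :
    𝓕 (fun j ↦ Φ (j + a)) k = stdAddChar (a * k) • 𝓕 Φ k := by
  rw [dft_apply, dft_apply, smul_sum]
  refine Fintype.sum_equiv (Equiv.addRight a) _ _ fun j ↦ ?_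
  rw [smul_smul, ← AddChar.map_add_eq_mul]
  simp only [Equiv.coe_addRight]
  congr 2
  ring

lemma dft_stdAddChar_smul (Φ : ZMod N → E) (a k : ZMod N) :
    𝓕 (fun j ↦ stdAddChar (j * a) • Φ j) k = 𝓕 Φ (k - a) := by
  simp only [dft_apply, smul_smul, ← AddChar.map_add_eq_mul]
  congr! 3
  ring

lemma sum_dft_mul_conj_dft (Φ Ψ : ZMod N → ℂ) :
    ∑ k, 𝓕 Φ k * conj (𝓕 Ψ k) = N * ∑ j, Φ j * conj (Ψ j) := by
  have hinv (j : ZMod N) : ∑ k, conj (stdAddChar (-(j * k))) * 𝓕 Ψ k = 𝓕 (𝓕 Ψ) (-j) := by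
    simp only [dft_apply (𝓕 Ψ), ← AddChar.map_neg_eq_conj, smul_eq_mul]
    congr! 3
    ring
  calc ∑ k, 𝓕 Φ k * conj (𝓕 Ψ k)
      = ∑ j, Φ j * conj (∑ k, conj (stdAddChar (-(j * k))) * 𝓕 Ψ k) := by
        simp only [dft_apply Φ, smul_eq_mul, sum_mul, map_sum, map_mul, conj_conj, mul_sum]
        rw [sum_comm]
        congr! 2
        ring
    _ = N * ∑ j, Φ j * conj (Ψ j) := by
        simp only [hinv, dft_dft, neg_neg, smul_eq_mul, map_mul, conj_natCast, mul_sum]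
        congr! 1
        ring

end ZMod

open ZMod

lemma dftV_eq_dft (d : ℕ) [NeZero d] (x : ZMod d → ℂ) : dftV d x = 𝓕 x := by
  ext k
  simp only [dftV, dft_apply, stdAddChar_neg_mul_eq_exp, smul_eq_mul]
  exact sum_congr rfl fun j _ ↦ mul_comm _ _

/-- index-swap identity for the Fourier transform of `x ∘ S_ω conj(x)`. -/
theorem fourier_index_swap (d : ℕ) [NeZero d] (x : ZMod d → ℂ) (α ω : ZMod d) :
    dftV d (hadV x (shiftV ω (conjV x))) α =
      (1 / (d : ℂ)) *
        Complex.exp (2 * Real.pi * Complex.I * (ω.val : ℂ) * (α.val : ℂ) / (d : ℂ)) *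
        dftV d (hadV (dftV d x) (shiftV (-α) (conjV (dftV d x)))) ω := by
  set y : ZMod d → ℂ := fun j ↦ stdAddChar (j * α) • x (j + ω)
  have hy (k : ZMod d) : 𝓕 y k = stdAddChar (ω * (k - α)) * 𝓕 x (k - α) :=
    (dft_stdAddChar_smul _ α k).trans (dft_comp_add_right x ω (k - α))
  have hphase (k : ZMod d) :
      conj (stdAddChar (ω * (k - α))) = stdAddChar (ω * α) * stdAddChar (-(k * ω)) := by
    rw [← AddChar.map_neg_eq_conj, ← AddChar.map_add_eq_mul]
    ring_nf
  have hd : (d : ℂ) ≠ 0 := NeZero.ne _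
  calc dftV d (hadV x (shiftV ω (conjV x))) α
      = ∑ j, x j * conj (y j) := by
        simp only [y, dftV_eq_dft, dft_apply, hadV, shiftV, conjV, smul_eq_mul, map_mul,
          ← AddChar.map_neg_eq_conj]
        exact sum_congr rfl fun j _ ↦ by ring
    _ = 1 / d * ∑ k, 𝓕 x k * conj (𝓕 y k) := by
        rw [sum_dft_mul_conj_dft]
        field_simp
    _ = _ := by
        rw [dftV_eq_dft, dftV_eq_dft, dft_apply (hadV _ _), ← stdAddChar_mul_eq_exp, mul_sum,
          mul_sum]
        refine sum_congr rfl fun k _ ↦ ?_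
        simp only [hy, map_mul, hphase, hadV, shiftV, conjV, smul_eq_mul, ← sub_eq_add_neg]
        ring
end

section
/- For all x, y ∈ ℂ^d and all ℓ, k ∈ [d]_0, ((x ∘ S_{-ℓ} y) ∗_d (conj(Rx) ∘ S_ℓ conj(Ry)))_k = ((x ∘ S_{-k} conj(x)) ∗_d ((Ry) ∘ S_k conj(Ry)))_ℓ. -/
open Complex BigOperators Finset

/-- convolution index-swap identity. -/
theorem conv_index_swap (d : ℕ) [NeZero d] (x y : ZMod d → ℂ) (ℓ k : ZMod d) :
    convV d (hadV x (shiftV (-ℓ) y))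
      (hadV (conjV (revV x)) (shiftV ℓ (conjV (revV y)))) k =
    convV d (hadV x (shiftV (-k) (conjV x)))
      (hadV (revV y) (shiftV k (conjV (revV y)))) ℓ := by
  simp only [convV, hadV, shiftV, conjV, revV]
  refine Finset.sum_congr rfl fun n _ => ?_
  have h2 : -(k - n + ℓ) = -(ℓ - n + k) := by ring
  have h3 : n + -ℓ = -(ℓ - n) := by ring
  have h4 : -(k - n) = n + -k := by ring
  rw [h2, h3, h4]
  ring
end

section
/- (Subsampled-column WDD identity, noiseless) Let x, m ∈ ℂ^d, let K divide d, and for ℓ ∈ [d]_0 let y_ℓ ∈ ℂ^d be given componentwise by (y_ℓ)_k = |Σ_{n=0}^{d-1} x_n m_{(n-ℓ) mod d} e^{-2πink/d}|^2. Then for every ℓ ∈ [d]_0 and ω ∈ [K]_0, (F_K Z_{d/K}(y_ℓ))_ω = K Σ_{r=0}^{d/K - 1} ((x ∘ S_{ω-rK} conj(x)) ∗_d ((Rm) ∘ S_{rK-ω} conj(Rm)))_ℓ. -/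
open Complex BigOperators Finset

/-!
Write `g n = x n * m (n - ℓ)`, so that `y ℓ k = |ĝ k|²`. Expanding the square writes `y ℓ k` as
a double sum of `g n * conj (g n')` against the character `e((n' - n) k / d)`. At the sampled
frequencies `k = j * (d / K)` this character is `e(c(n' - n) j / K)`, where `c : ZMod d → ZMod K`
is reduction mod `K`, so the `K`-point transform at `ω` is, by orthogonality of characters,
`K` times the sum over the lags `a = n' - n` with `c a = ω`. These lags are exactly
`ω - r K` for `r < d / K`, and the correlation `∑ n, g n * conj (g (n + a))` at lag `a` is the
`r`-th convolution on the right-hand side.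
-/

namespace ZMod

lemma exp_neg_two_pi_I_mul_div_eq_stdAddChar {N : ℕ} [NeZero N] (a b : ℕ) :
    exp (-2 * Real.pi * I * a * b / N) = stdAddChar (-(a * b : ZMod N)) := by
  have h := stdAddChar_coe (N := N) (-(a * b : ℤ))
  push_cast at h
  rw [h]
  ring_nf

lemma dftV_eq_dft {N : ℕ} [NeZero N] (x : ZMod N → ℂ) : dftV N x = dft x := by
  ext k
  refine Finset.sum_congr rfl fun n _ => ?_
  rw [exp_neg_two_pi_I_mul_div_eq_stdAddChar, natCast_zmod_val, natCast_zmod_val, smul_eq_mul,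
    mul_comm]

lemma stdAddChar_mul_natCast_mul_div {d K : ℕ} [NeZero d] [NeZero K] (hK : K ∣ d)
    (t : ZMod d) (j : ZMod K) :
    stdAddChar (t * ((j.val * (d / K) : ℕ) : ZMod d)) = stdAddChar (castHom hK (ZMod K) t * j) := by
  obtain ⟨D, hD⟩ := hK
  have hdiv : d / K = D := by rw [hD, Nat.mul_div_cancel_left _ (Nat.pos_of_ne_zero (NeZero.ne K))]
  have hlhs : t * ((j.val * (d / K) : ℕ) : ZMod d) = ((t.val * (j.val * D) : ℤ) : ZMod d) := by
    push_cast [hdiv, natCast_zmod_val]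
    rfl
  have hrhs : castHom ⟨D, hD⟩ (ZMod K) t * j = ((t.val * j.val : ℤ) : ZMod K) := by
    rw [castHom_apply, cast_eq_val]
    push_cast [natCast_zmod_val]
    rfl
  have hK0 : (K : ℂ) ≠ 0 := Nat.cast_ne_zero.mpr (NeZero.ne K)
  have hD0 : (D : ℂ) ≠ 0 := by
    have : D ≠ 0 := by rintro rfl; exact NeZero.ne d (by simpa using hD)
    exact_mod_cast this
  have hdC : (d : ℂ) = K * D := by exact_mod_cast hD
  rw [hlhs, hrhs, stdAddChar_coe, stdAddChar_coe, hdC]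
  congr 1
  push_cast
  field_simp

lemma sq_norm_dft_eq_sum {N : ℕ} [NeZero N] (g : ZMod N → ℂ) (k : ZMod N) :
    (‖dft g k‖ : ℂ) ^ 2 =
      ∑ n, ∑ n', g n * (starRingEnd ℂ) (g n') * stdAddChar ((n' - n) * k) := by
  rw [← Complex.mul_conj', dft_apply, map_sum, Finset.sum_mul_sum]
  refine Finset.sum_congr rfl fun n _ => Finset.sum_congr rfl fun n' _ => ?_
  rw [smul_eq_mul, smul_eq_mul, map_mul, ← AddChar.map_neg_eq_conj, neg_neg, sub_mul,
    sub_eq_add_neg, AddChar.map_add_eq_mul, ← neg_mul]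
  ring

lemma sum_stdAddChar_neg_mul_mul_stdAddChar_mul {N : ℕ} [NeZero N] (s ω : ZMod N) :
    ∑ j : ZMod N, stdAddChar (-(j * ω)) * stdAddChar (s * j) = if s = ω then (N : ℂ) else 0 := by
  simp_rw [← AddChar.map_add_eq_mul, show ∀ j : ZMod N, -(j * ω) + s * j = j * (s - ω) by
    intro j; ring]
  simp only [AddChar.sum_mulShift _ (isPrimitive_stdAddChar N), ZMod.card, sub_eq_zero,
    Nat.cast_ite, Nat.cast_zero]

lemma dft_sq_norm_dft_natCast_mul_div {d K : ℕ} [NeZero d] [NeZero K] (hK : K ∣ d)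
    (g : ZMod d → ℂ) (ω : ZMod K) :
    dft (fun j : ZMod K => (‖dft g ((j.val * (d / K) : ℕ) : ZMod d)‖ : ℂ) ^ 2) ω =
      K * ∑ a with castHom hK (ZMod K) a = ω, ∑ n, g n * (starRingEnd ℂ) (g (n + a)) := by
  set c := castHom hK (ZMod K)
  calc dft (fun j : ZMod K => (‖dft g ((j.val * (d / K) : ℕ) : ZMod d)‖ : ℂ) ^ 2) ω
      = ∑ n, ∑ n', g n * (starRingEnd ℂ) (g n') *
          ∑ j : ZMod K, stdAddChar (-(j * ω)) * stdAddChar (c (n' - n) * j) := by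
        rw [dft_apply]
        simp only [sq_norm_dft_eq_sum, smul_eq_mul, stdAddChar_mul_natCast_mul_div hK,
          Finset.mul_sum]
        rw [Finset.sum_comm]
        refine Finset.sum_congr rfl fun n _ => ?_
        rw [Finset.sum_comm]
        refine Finset.sum_congr rfl fun n' _ => Finset.sum_congr rfl fun j _ => ?_
        ring
    _ = K * ∑ n, ∑ a, if c a = ω then g n * (starRingEnd ℂ) (g (n + a)) else 0 := by
        simp only [sum_stdAddChar_neg_mul_mul_stdAddChar_mul, Finset.mul_sum]
        refine Finset.sum_congr rfl fun n _ => ?_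
        rw [← Equiv.sum_comp (Equiv.addLeft n)]
        refine Finset.sum_congr rfl fun a _ => ?_
        simp only [Equiv.coe_addLeft, add_sub_cancel_left]
        split_ifs <;> ring
    _ = _ := by
        rw [Finset.sum_comm, Finset.sum_filter]
        simp only [Finset.sum_ite_irrel, Finset.sum_const_zero]

lemma sum_filter_castHom_eq_sum_range {M : Type*} [AddCommMonoid M] {d K : ℕ} [NeZero d]
    (hK : K ∣ d) (ω : ZMod K) (F : ZMod d → M) :
    ∑ a with castHom hK (ZMod K) a = ω, F a = ∑ r ∈ Finset.range (d / K), F (ω.val - r * K) := by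
  have hK0 : 0 < K := Nat.pos_of_dvd_of_pos hK (NeZero.pos d)
  have : NeZero K := ⟨hK0.ne'⟩
  have hlt : ∀ r ∈ Finset.range (d / K), r * K < d := fun r hr => by
    rw [mul_comm]; exact (Nat.lt_div_iff_mul_lt' hK r).mp (Finset.mem_range.mp hr)
  refine (Finset.sum_bij (fun (r : ℕ) _ => (ω.val : ZMod d) - (r : ZMod d) * K) ?_ ?_ ?_ ?_).symm
  · intro r _
    rw [Finset.mem_filter, map_sub, map_mul, map_natCast, map_natCast, map_natCast,
      natCast_zmod_val, natCast_self, mul_zero, sub_zero]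
    exact ⟨Finset.mem_univ _, rfl⟩
  · intro r₁ hr₁ r₂ hr₂ h
    have h' : ((r₁ * K : ℕ) : ZMod d) = ((r₂ * K : ℕ) : ZMod d) := by
      push_cast; exact sub_right_injective h
    rw [natCast_eq_natCast_iff', Nat.mod_eq_of_lt (hlt r₁ hr₁),
      Nat.mod_eq_of_lt (hlt r₂ hr₂)] at h'
    exact Nat.eq_of_mul_eq_mul_right hK0 h'
  · intro a ha
    set b : ZMod d := (ω.val : ZMod d) - a
    have hb : K ∣ b.val := by
      rw [← natCast_eq_zero_iff, ← cast_eq_val, ← castHom_apply (h := hK), map_sub, map_natCast, natCast_zmod_val, (Finset.mem_filter.mp ha).2, sub_self]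
    refine ⟨b.val / K, Finset.mem_range.mpr (Nat.div_lt_div_of_lt_of_dvd hK b.val_lt), ?_⟩
    rw [← Nat.cast_mul, Nat.div_mul_cancel hb, natCast_zmod_val, sub_sub_cancel]
  · intro r _
    rfl

end ZMod

lemma convV_hadV_shiftV_eq_sum {d : ℕ} [NeZero d] (x m : ZMod d → ℂ) (a ℓ : ZMod d) :
    convV d (hadV x (shiftV a (conjV x))) (hadV (revV m) (shiftV (-a) (conjV (revV m)))) ℓ =
      ∑ n, x n * m (n - ℓ) * (starRingEnd ℂ) (x (n + a) * m (n + a - ℓ)) := by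
  refine Finset.sum_congr rfl fun n _ => ?_
  have hidx : -(ℓ - n + -a) = n + a - ℓ := by ring
  simp only [hadV, shiftV, revV, conjV, map_mul, hidx, neg_sub]
  ring

/-- subsampled-column WDD identity, noiseless. -/
theorem wdd_subsampled_col (d K : ℕ) [NeZero d] [NeZero K]
    (hK : K ∣ d) (x m : ZMod d → ℂ) (y : ZMod d → ZMod d → ℂ)
    (hy : ∀ ℓ k : ZMod d, y ℓ k =
      ((‖(∑ n : ZMod d, x n * m (n - ℓ) *
        Complex.exp (-2 * Real.pi * Complex.I * (n.val : ℂ) * (k.val : ℂ) / (d : ℂ)))‖) ^ 2 : ℂ)) :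
    ∀ ℓ : ZMod d, ∀ ω : ZMod K,
      dftV K (fun n : ZMod K => y ℓ ((n.val * (d / K) : ℕ) : ZMod d)) ω =
        (K : ℂ) * ∑ r ∈ Finset.range (d / K),
          convV d
            (hadV x (shiftV (((ω.val : ℤ) - (r : ℤ) * (K : ℤ) : ℤ) : ZMod d) (conjV x)))
            (hadV (revV m) (shiftV ((((r : ℤ) * (K : ℤ) - (ω.val : ℤ)) : ℤ) : ZMod d)
              (conjV (revV m)))) ℓ := by
  intro ℓ ω
  have hy' : ∀ k, y ℓ k = (‖ZMod.dft (fun n => x n * m (n - ℓ)) k‖ : ℂ) ^ 2 := fun k => by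
    rw [hy, ← ZMod.dftV_eq_dft]
    rfl
  simp only [hy', ZMod.dftV_eq_dft, ZMod.dft_sq_norm_dft_natCast_mul_div hK,
    ZMod.sum_filter_castHom_eq_sum_range hK]
  refine congrArg _ (Finset.sum_congr rfl fun r _ => ?_)
  have hneg : (((r : ℤ) * K - ω.val : ℤ) : ZMod d) = -(((ω.val : ℤ) - r * K : ℤ) : ZMod d) := by
    push_cast
    ring
  rw [hneg, convV_hadV_shiftV_eq_sum]
  push_cast
  rfl
end

section
/- Let m ∈ ℂ^d with (F_d m) = (a_0 e^{iθ_0}, …, a_{ρ-1} e^{iθ_{ρ-1}}, 0, …, 0)^T for real a_0,…,a_{ρ-1} and θ_0,…,θ_{ρ-1}, where ρ < d/2 and 2 ≤ κ ≤ ρ. If |a_0| > (ρ-1)|a_1| and |a_1| ≥ |a_2| ≥ … ≥ |a_{ρ-1}| > 0, then for every p with |p| ≤ κ-1 and every q ∈ [d]_0, (F_d((F_d m) ∘ S_p conj(F_d m)))_q ≠ 0; consequently μ_1 := min over such p, q of |(F_d((F_d m) ∘ S_p conj(F_d m)))_q| is strictly positive. -/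
open Complex BigOperators Finset

open scoped ComplexConjugate

/- The `q`-th entry is `∑ₙ M n · conj M (n + p) · e^{-2πinq/d}` with `M = F_d m` supported on
`[0, ρ)`. Since `2ρ < d` no index wraps around, so for `t = |p|` this is a sum over `j < ρ` of
terms of modulus `|a j| |a (j + t)|`. The term `j = 0` has modulus `|a 0| |a t|`, while each of the
other `ρ - 1` terms is at most `|a 1| |a t|`; as `(ρ - 1) |a 1| < |a 0|` and `|a t| > 0`, the
first term cannot be cancelled. -/

theorem Finset.sum_ne_zero_of_sum_erase_norm_lt {ι E : Type*} [DecidableEq ι]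
    [NormedAddCommGroup E] {s : Finset ι} {i : ι} (hi : i ∈ s) (f : ι → E)
    (h : ∑ j ∈ s.erase i, ‖f j‖ < ‖f i‖) : ∑ j ∈ s, f j ≠ 0 := by
  intro hzero
  rw [← add_sum_erase s f hi, add_eq_zero_iff_eq_neg] at hzero
  have := norm_sum_le (s.erase i) f
  rw [hzero, norm_neg] at h
  linarith

theorem sum_erase_zero_mul_shift_lt {ρ t : ℕ} (hρ : 0 < ρ) {α : ℕ → ℝ} (hα : Antitone α)
    (hα_nonneg : ∀ j, 0 ≤ α j) (hα0 : ((ρ : ℝ) - 1) * α 1 < α 0) (hαt : 0 < α t) :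
    ∑ j ∈ (range ρ).erase 0, α j * α (j + t) < α 0 * α t := by
  calc ∑ j ∈ (range ρ).erase 0, α j * α (j + t)
      ≤ ∑ _j ∈ (range ρ).erase 0, α 1 * α t := by
        refine sum_le_sum fun j hj => ?_
        have hj1 : 1 ≤ j := Nat.one_le_iff_ne_zero.2 (ne_of_mem_erase hj)
        exact mul_le_mul (hα hj1) (hα (Nat.le_add_left t j)) (hα_nonneg _) (hα_nonneg _)
    _ = ((ρ : ℝ) - 1) * α 1 * α t := by
        rw [sum_const, card_erase_of_mem (mem_range.2 hρ), card_range, nsmul_eq_mul,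
          Nat.cast_sub hρ, Nat.cast_one, mul_assoc]
    _ < α 0 * α t := mul_lt_mul_of_pos_right hα0 hαt

theorem sum_range_ne_zero_of_norm_eq_mul_shift {ρ t : ℕ} (hρ : 0 < ρ) {α : ℕ → ℝ}
    (hα : Antitone α) (hα_nonneg : ∀ j, 0 ≤ α j) (hα0 : ((ρ : ℝ) - 1) * α 1 < α 0)
    (hαt : 0 < α t) (c : ℕ → ℂ) (hc : ∀ j, ‖c j‖ = α j * α (j + t)) :
    ∑ j ∈ range ρ, c j ≠ 0 := by
  refine sum_ne_zero_of_sum_erase_norm_lt (mem_range.2 hρ) c ?_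
  simpa only [hc, zero_add] using sum_erase_zero_mul_shift_lt hρ hα hα_nonneg hα0 hαt

theorem ZMod.sum_eq_sum_range_of_eq_zero {M : Type*} [AddCommMonoid M] {d r : ℕ} [NeZero d]
    (hr : r ≤ d) (f : ZMod d → M) (hf : ∀ n : ZMod d, r ≤ n.val → f n = 0) :
    ∑ n, f n = ∑ j ∈ range r, f j := by
  have hinj : Set.InjOn (Nat.cast : ℕ → ZMod d) (range r) := fun i hi j hj hij => by
    simpa [ZMod.val_cast_of_lt ((mem_range.1 hi).trans_le hr),
      ZMod.val_cast_of_lt ((mem_range.1 hj).trans_le hr)] using congrArg ZMod.val hij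
  rw [← sum_image hinj]
  refine (sum_subset (subset_univ _) fun n _ hn => hf n ?_).symm
  by_contra hlt
  exact hn (mem_image.2 ⟨n.val, mem_range.2 (not_le.1 hlt), ZMod.natCast_zmod_val n⟩)

section Shift

variable {d ρ t : ℕ} [NeZero d] {A : ℕ → ℂ}

theorem sum_mul_conj_add_natCast (hA : ∀ j, ρ ≤ j → A j = 0) (hd : ρ + t ≤ d)
    (w : ZMod d → ℂ) :
    ∑ n : ZMod d, A n.val * conj (A (n + t).val) * w n
      = ∑ j ∈ range ρ, A j * conj (A (j + t)) * w j := by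
  rw [ZMod.sum_eq_sum_range_of_eq_zero (r := ρ) (by omega) _ fun n hn => by simp [hA _ hn]]
  refine sum_congr rfl fun j hj => ?_
  have hj := mem_range.1 hj
  rw [← Nat.cast_add, ZMod.val_cast_of_lt (by omega), ZMod.val_cast_of_lt (by omega)]

theorem sum_mul_conj_sub_natCast (hA : ∀ j, ρ ≤ j → A j = 0) (hd : ρ + t ≤ d)
    (w : ZMod d → ℂ) :
    ∑ n : ZMod d, A n.val * conj (A (n + -(t : ZMod d)).val) * w n
      = ∑ j ∈ range ρ, A (j + t) * conj (A j) * w (j + t) := by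
  rw [← Equiv.sum_comp (Equiv.addRight (t : ZMod d))]
  simp only [Equiv.coe_addRight, add_neg_cancel_right]
  rw [ZMod.sum_eq_sum_range_of_eq_zero (r := ρ) (by omega) _ fun n hn => by simp [hA _ hn]]
  refine sum_congr rfl fun j hj => ?_
  have hj := mem_range.1 hj
  rw [← Nat.cast_add, ZMod.val_cast_of_lt (by omega), ZMod.val_cast_of_lt (by omega)]

theorem exists_sum_range_eq_sum_mul_conj_add_intCast (hA : ∀ j, ρ ≤ j → A j = 0) {p : ℤ}
    (hd : ρ + p.natAbs ≤ d) (w : ZMod d → ℂ) (hw : ∀ n, ‖w n‖ = 1) :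
    ∃ c : ℕ → ℂ, (∀ j, ‖c j‖ = ‖A j‖ * ‖A (j + p.natAbs)‖) ∧
      ∑ n : ZMod d, A n.val * conj (A (n + p).val) * w n = ∑ j ∈ range ρ, c j := by
  obtain ⟨t, rfl | rfl⟩ : ∃ t : ℕ, p = t ∨ p = -t := ⟨_, Int.natAbs_eq p⟩
  · simp only [Int.natAbs_natCast, Int.cast_natCast] at hd ⊢
    refine ⟨_, fun j => ?_, sum_mul_conj_add_natCast hA hd w⟩
    rw [norm_mul, norm_mul, RCLike.norm_conj, hw, mul_one]
  · simp only [Int.natAbs_neg, Int.natAbs_natCast, Int.cast_neg, Int.cast_natCast] at hd ⊢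
    refine ⟨_, fun j => ?_, sum_mul_conj_sub_natCast hA hd w⟩
    rw [norm_mul, norm_mul, RCLike.norm_conj, hw, mul_one, mul_comm]

end Shift

theorem norm_exp_neg_two_pi_I_mul_div (n k d : ℕ) :
    ‖exp (-2 * Real.pi * I * n * k / d)‖ = 1 := by
  have : -2 * Real.pi * I * n * k / d = ((-2 * Real.pi * n * k / d : ℝ) : ℂ) * I := by
    push_cast; ring
  rw [this, norm_exp_ofReal_mul_I]

theorem antitone_ite_lt_abs {ρ : ℕ} {a : ℕ → ℝ} (h10 : |a 1| ≤ |a 0|)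
    (hmono : ∀ j : ℕ, 1 ≤ j → j + 1 ≤ ρ - 1 → |a (j + 1)| ≤ |a j|) :
    Antitone fun j => if j < ρ then |a j| else 0 := by
  refine antitone_nat_of_succ_le fun j => ?_
  split_ifs with hj1 hj
  · rcases Nat.eq_zero_or_pos j with rfl | hj0
    · exact h10
    · exact hmono j hj0 (by omega)
  · omega
  · exact abs_nonneg _
  · exact le_rfl

/-- nonvanishing of the mask-dependent quantities for bandlimited masks. -/
theorem mu1_pos (d ρ κ : ℕ) [NeZero d] (hρ : 2 * ρ < d) (hκ2 : 2 ≤ κ) (hκρ : κ ≤ ρ)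
    (m : ZMod d → ℂ) (a θ : ℕ → ℝ)
    (hm : ∀ k : ZMod d, dftV d m k =
      if k.val < ρ then (a k.val : ℂ) * Complex.exp (Complex.I * (θ k.val : ℂ)) else 0)
    (ha0 : ((ρ : ℝ) - 1) * |a 1| < |a 0|)
    (hmono : ∀ j : ℕ, 1 ≤ j → j + 1 ≤ ρ - 1 → |a (j + 1)| ≤ |a j|)
    (hlast : 0 < |a (ρ - 1)|) :
    ∀ p : ℤ, p.natAbs ≤ κ - 1 → ∀ q : ZMod d,
      dftV d (hadV (dftV d m) (shiftV ((p : ℤ) : ZMod d) (conjV (dftV d m)))) q ≠ 0 := by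
  intro p hp q
  have hρ2 : 2 ≤ ρ := hκ2.trans hκρ
  set A : ℕ → ℂ := fun j => if j < ρ then (a j : ℂ) * exp (I * θ j) else 0
  have hA : ∀ j, ρ ≤ j → A j = 0 := fun j hj => if_neg (not_lt.2 hj)
  have hnormA : ∀ j, ‖A j‖ = if j < ρ then |a j| else 0 := fun j => by
    split_ifs with hj <;> simp [A, hj, norm_exp_I_mul_ofReal]
  have h10 : |a 1| ≤ |a 0| := by
    have : (2 : ℝ) ≤ ρ := by exact_mod_cast hρ2
    nlinarith [abs_nonneg (a 1)]
  have hanti : Antitone fun j => ‖A j‖ := by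
    simpa only [hnormA] using antitone_ite_lt_abs h10 hmono
  have hAp : 0 < ‖A p.natAbs‖ := by
    refine hlast.trans_le ?_
    simpa [hnormA, show ρ - 1 < ρ by omega] using hanti (show p.natAbs ≤ ρ - 1 by omega)
  have hA0 : ((ρ : ℝ) - 1) * ‖A 1‖ < ‖A 0‖ := by
    simpa [hnormA, show 1 < ρ by omega, show 0 < ρ by omega] using ha0
  have hd : ρ + p.natAbs ≤ d := by omega
  obtain ⟨c, hc, hsum⟩ := exists_sum_range_eq_sum_mul_conj_add_intCast hA hd
    (fun n => exp (-2 * Real.pi * I * n.val * q.val / d)) fun _ => norm_exp_neg_two_pi_I_mul_div ..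
  rw [show dftV d m = fun k => A k.val from funext hm]
  exact hsum.trans_ne <| sum_range_ne_zero_of_norm_eq_mul_shift (by omega) hanti
    (fun _ => norm_nonneg _) hA0 hAp c hc
end
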